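/- arXiv:2302.12940 — 3 statements merged into one kernel-verified Lean document; each statement's English description precedes it below -/
import Mathlib

section
/- For every integer p ≥ 2 and every real number z with 0 ≤ z ≤ 1/2, the degree-p Taylor polynomial of the exponential at 0 satisfies T_p(−z) ≤ 1 − z/2. -/
/-- `T p x` is the degree-`p` Taylor polynomial of the exponential function at `0`. -/
noncomputable def taylorExp (p : ℕ) (x : ℝ) : ℝ :=
  ∑ j ∈ Finset.range (p + 1), x ^ j / (Nat.factorial j : ℝ)

/-!
For `0 ≤ z ≤ 1` the terms `z ^ j / j!` decrease, so `T_p (-z)` is a partial sum of an alternating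
series with decreasing terms: adding an odd term, or an odd term together with the following
even one, cannot increase it. Hence `T_p (-z) ≤ T_2 (-z) = 1 - z + z ^ 2 / 2 ≤ 1 - z / 2`.
-/

lemma taylorExp_succ (p : ℕ) (x : ℝ) :
    taylorExp (p + 1) x = taylorExp p x + x ^ (p + 1) / (Nat.factorial (p + 1) : ℝ) := by
  simp [taylorExp, Finset.sum_range_succ]

lemma taylorExp_two (x : ℝ) : taylorExp 2 x = 1 + x + x ^ 2 / 2 := by
  simp [taylorExp, Finset.sum_range_succ]

section NegativeArgument

variable {z : ℝ}

lemma neg_pow_div_factorial_nonpos (hz : 0 ≤ z) {j : ℕ} (hj : Odd j) :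
    (-z) ^ j / (Nat.factorial j : ℝ) ≤ 0 := by
  rw [hj.neg_pow, neg_div]
  exact neg_nonpos.mpr (by positivity)

lemma neg_pow_div_factorial_add_succ_nonpos (hz0 : 0 ≤ z) (hz1 : z ≤ 1) {j : ℕ} (hj : Odd j) :
    (-z) ^ j / (Nat.factorial j : ℝ) + (-z) ^ (j + 1) / (Nat.factorial (j + 1) : ℝ) ≤ 0 := by
  rw [hj.neg_pow, (Nat.even_add_one.mpr (Nat.not_even_iff_odd.mpr hj)).neg_pow, neg_div,
    neg_add_nonpos_iff]
  have hfact : (Nat.factorial j : ℝ) ≤ Nat.factorial (j + 1) := by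
    exact_mod_cast Nat.factorial_le (Nat.le_succ j)
  have hpow : z ^ (j + 1) ≤ z ^ j := pow_le_pow_of_le_one hz0 hz1 (Nat.le_succ j)
  gcongr

lemma taylorExp_neg_succ_le (hz : 0 ≤ z) {p : ℕ} (hp : Even p) :
    taylorExp (p + 1) (-z) ≤ taylorExp p (-z) := by
  rw [taylorExp_succ]
  linarith [neg_pow_div_factorial_nonpos hz hp.add_one]

lemma taylorExp_neg_add_two_le (hz0 : 0 ≤ z) (hz1 : z ≤ 1) {p : ℕ} (hp : Even p) :
    taylorExp (p + 2) (-z) ≤ taylorExp p (-z) := by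
  rw [taylorExp_succ, taylorExp_succ]
  linarith [neg_pow_div_factorial_add_succ_nonpos hz0 hz1 hp.add_one]

lemma taylorExp_neg_le_of_even (hz0 : 0 ≤ z) (hz1 : z ≤ 1) {p q : ℕ} (hq : Even q)
    (hqp : q ≤ p) : taylorExp p (-z) ≤ taylorExp q (-z) := by
  have hanti : Antitone fun m ↦ taylorExp (q + 2 * m) (-z) :=
    antitone_nat_of_succ_le fun m ↦
      taylorExp_neg_add_two_le hz0 hz1 (hq.add (even_two_mul m))
  have heven (m : ℕ) : taylorExp (q + 2 * m) (-z) ≤ taylorExp q (-z) := hanti (Nat.zero_le m)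
  obtain ⟨m, rfl | rfl⟩ : ∃ m, p = q + 2 * m ∨ p = q + 2 * m + 1 :=
    ⟨(p - q) / 2, by omega⟩
  · exact heven m
  · exact (taylorExp_neg_succ_le hz0 (hq.add (even_two_mul m))).trans (heven m)

end NegativeArgument

/-- For every integer `p ≥ 2` and real `z` with `0 ≤ z ≤ 1/2`,
`T_p (−z) ≤ 1 − z/2`. -/
theorem taylor_upper_bound (p : ℕ) (hp : 2 ≤ p) (z : ℝ) (hz0 : 0 ≤ z) (hz1 : z ≤ 1 / 2) :
    taylorExp p (-z) ≤ 1 - z / 2 := by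
  calc taylorExp p (-z) ≤ taylorExp 2 (-z) :=
        taylorExp_neg_le_of_even hz0 (by linarith) even_two hp
    _ = 1 - z + z ^ 2 / 2 := by rw [taylorExp_two]; ring
    _ ≤ 1 - z / 2 := by nlinarith
end

section
/- For every integer p ≥ 1 and every real number z with 0 ≤ z ≤ 1/2, the degree-p Taylor polynomial of the exponential at 0 satisfies T_p(−z) ≥ exp(−1/2) − 1/(2^p · (p+1)!), and consequently T_p(−z) ≥ 1/4. -/
/-!
On `[-1, 1]` the Lagrange-type remainder estimate of `Real.exp_bound` gives
`|exp x - T_p x| ≤ 2 |x|^(p+1) / (p+1)!`; for `x = -z` with `0 ≤ z ≤ 1/2` this error is at most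
`1 / (2^p (p+1)!)`, while `exp (-z) ≥ exp (-1/2)`. For `p ≥ 1` the error is at most `1/4` and
`exp (-1/2) ≥ 1 - 1/2`, which gives the bound `1/4`.
-/

open Real

theorem abs_exp_sub_taylorExp_le (p : ℕ) {x : ℝ} (hx : |x| ≤ 1) :
    |exp x - taylorExp p x| ≤ 2 * |x| ^ (p + 1) / (p + 1).factorial := by
  have hremainder := Real.exp_bound hx (Nat.succ_pos p)
  push_cast at hremainder
  have hfact : (0 : ℝ) < (p + 1).factorial := by positivity
  have hcoeff : ((p : ℝ) + 1 + 1) / ((p + 1).factorial * ((p : ℝ) + 1)) ≤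
      2 / (p + 1).factorial := by
    rw [div_le_div_iff₀ (by positivity) hfact]
    nlinarith
  calc |exp x - taylorExp p x|
      ≤ |x| ^ (p + 1) * (((p : ℝ) + 1 + 1) / ((p + 1).factorial * ((p : ℝ) + 1))) := hremainder
    _ ≤ |x| ^ (p + 1) * (2 / (p + 1).factorial) := by gcongr
    _ = 2 * |x| ^ (p + 1) / (p + 1).factorial := by ring

theorem two_mul_pow_div_factorial_le_of_le_half (p : ℕ) {z : ℝ} (hz0 : 0 ≤ z) (hz1 : z ≤ 1 / 2) :
    2 * z ^ (p + 1) / (p + 1).factorial ≤ 1 / (2 ^ p * (p + 1).factorial) := by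
  calc 2 * z ^ (p + 1) / (p + 1).factorial
      ≤ 2 * (1 / 2) ^ (p + 1) / (p + 1).factorial := by gcongr
    _ = 1 / (2 ^ p * (p + 1).factorial) := by
      rw [pow_succ, one_div_pow]
      field_simp

theorem exp_neg_half_sub_le_taylorExp_neg (p : ℕ) {z : ℝ} (hz0 : 0 ≤ z) (hz1 : z ≤ 1 / 2) :
    exp (-(1 / 2)) - 1 / (2 ^ p * (p + 1).factorial) ≤ taylorExp p (-z) := by
  have habs : |-z| = z := by rw [abs_neg, abs_of_nonneg hz0]
  have herror := abs_exp_sub_taylorExp_le p (x := -z) (by linarith)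
  rw [habs] at herror
  have hexp : exp (-(1 / 2)) ≤ exp (-z) := exp_le_exp.2 (by linarith)
  linarith [(abs_sub_le_iff.1 herror).1, two_mul_pow_div_factorial_le_of_le_half p hz0 hz1]

theorem four_le_two_pow_mul_factorial {p : ℕ} (hp : 1 ≤ p) :
    (4 : ℝ) ≤ 2 ^ p * (p + 1).factorial := by
  have hpow : (2 : ℝ) ≤ 2 ^ p := by
    simpa using pow_le_pow_right₀ (by norm_num : (1 : ℝ) ≤ 2) hp
  have hfact : (2 : ℝ) ≤ (p + 1).factorial := by
    exact_mod_cast (Nat.self_le_factorial (p + 1)).trans' (by omega)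
  nlinarith

/-- For every integer `p ≥ 1` and real `z` with `0 ≤ z ≤ 1/2`,
`T_p (−z) ≥ exp(−1/2) − 1/(2^p · (p+1)!)`, and consequently `T_p (−z) ≥ 1/4`. -/
theorem taylor_lower_bound (p : ℕ) (hp : 1 ≤ p) (z : ℝ) (hz0 : 0 ≤ z) (hz1 : z ≤ 1 / 2) :
    Real.exp (-(1 / 2)) - 1 / (2 ^ p * (Nat.factorial (p + 1) : ℝ)) ≤ taylorExp p (-z) ∧
    (1 : ℝ) / 4 ≤ taylorExp p (-z) := by
  have hmain := exp_neg_half_sub_le_taylorExp_neg p hz0 hz1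
  refine ⟨hmain, ?_⟩
  have hexp : 1 / 2 ≤ exp (-(1 / 2)) := by linarith [add_one_le_exp (-(1 / 2))]
  have herror : 1 / (2 ^ p * (p + 1).factorial : ℝ) ≤ 1 / 4 :=
    one_div_le_one_div_of_le (by norm_num) (four_le_two_pow_mul_factorial hp)
  linarith
end

section
/- For integers i with 1 ≤ i ≤ h and reals c, d with 0 ≤ c, d ≤ v, define f̂_{i,c,d} : ℝ → ℝ by f̂_{i,c,d}(x) = exp(−(c+x)/(v^{q−1}·(3 − i/h))) · exp(−(d−x)/(v^{q−1}·(3 − (i+1)/h))). Then: (a) f̂_{i,c,d} is differentiable with derivative f̂'_{i,c,d}(x) = f̂_{i,c,d}(x) · h/(v^{q−1}·(3h−i)·(3h−i−1)); (b) for every real x with 0 ≤ x ≤ v, f̂_{i,c,d}(x) ≥ exp(−3/v^{q−2}) ≥ exp(−3); and (c) for every real x with 1 ≤ x ≤ v, f̂_{i,c,d}(x) − f̂_{i,c,d}(x−1) ≥ exp(−3)/(9·h·v^{q−1}). -/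
/-!
With `A = v^(q-1) (3 - i/h)` and `B = v^(q-1) (3 - (i+1)/h)`, the function
`f̂(x) = exp (-(c+x)/A) · exp (-(d-x)/B)` is a constant times `exp (δ x)` with
`δ = 1/B - 1/A = h / (v^(q-1) (3h-i) (3h-i-1))`. Hence `f̂' = δ f̂` and
`f̂(x) - f̂(x-1) = f̂(x-1) (e^δ - 1) ≥ δ f̂(x-1)`, where `δ ≥ 1 / (9 h v^(q-1))`.
Since `A ≥ 2 v^(q-1)` and `B ≥ v^(q-1)`, on `[0, v]` we have `(c+x)/A ≤ 1/v^(q-2)` and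
`(d-x)/B ≤ 1/v^(q-2)`, which bounds `f̂` from below.
-/

noncomputable def fhat (v h q : ℕ) (i : ℕ) (c d : ℝ) (x : ℝ) : ℝ :=
  Real.exp (-((c + x) / ((v : ℝ) ^ (q - 1) * (3 - (i : ℝ) / (h : ℝ))))) *
    Real.exp (-((d - x) / ((v : ℝ) ^ (q - 1) * (3 - ((i : ℝ) + 1) / (h : ℝ)))))

open Real

noncomputable def expPair (A B c d x : ℝ) : ℝ :=
  exp (-((c + x) / A)) * exp (-((d - x) / B))

section expPair

variable {A B c d : ℝ}

theorem hasDerivAt_expPair (x : ℝ) :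
    HasDerivAt (expPair A B c d) (expPair A B c d x * (1 / B - 1 / A)) x := by
  have hc : HasDerivAt (fun y ↦ -((c + y) / A)) (-(1 / A)) x :=
    (((hasDerivAt_id x).const_add c).div_const A).neg.congr_deriv (by ring)
  have hd : HasDerivAt (fun y ↦ -((d - y) / B)) (1 / B) x :=
    (((hasDerivAt_id x).const_sub d).div_const B).neg.congr_deriv (by ring)
  exact (hc.exp.mul hd.exp).congr_deriv (by unfold expPair; ring)

theorem expPair_pos (x : ℝ) : 0 < expPair A B c d x := by
  unfold expPair; positivity

theorem expPair_eq_mul_exp (hA : A ≠ 0) (hB : B ≠ 0) (x : ℝ) :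
    expPair A B c d x = expPair A B c d (x - 1) * exp (1 / B - 1 / A) := by
  simp only [expPair, ← exp_add, exp_eq_exp]
  field_simp
  ring

theorem exp_neg_add_le_expPair {a b x : ℝ} (hA : 0 < A) (hB : 0 < B)
    (hcx : c + x ≤ a * A) (hdx : d - x ≤ b * B) :
    exp (-(a + b)) ≤ expPair A B c d x := by
  rw [expPair, ← exp_add, exp_le_exp, neg_add]
  gcongr
  · exact (div_le_iff₀ hA).2 hcx
  · exact (div_le_iff₀ hB).2 hdx

theorem mul_le_expPair_sub (hA : A ≠ 0) (hB : B ≠ 0) (x : ℝ) :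
    expPair A B c d (x - 1) * (1 / B - 1 / A) ≤ expPair A B c d x - expPair A B c d (x - 1) := by
  have := add_one_le_exp (1 / B - 1 / A)
  rw [expPair_eq_mul_exp hA hB x]
  nlinarith [expPair_pos (A := A) (B := B) (c := c) (d := d) (x - 1)]

end expPair

section rate

variable {P h i : ℝ}

theorem two_le_three_sub_div (hh : 0 < h) (hih : i ≤ h) : 2 ≤ 3 - i / h := by
  have := (div_le_one hh).2 hih
  linarith

theorem one_le_three_sub_succ_div (hh : 1 ≤ h) (hih : i ≤ h) : 1 ≤ 3 - (i + 1) / h := by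
  have : (i + 1) / h ≤ 2 := (div_le_iff₀ (by linarith)).2 (by linarith)
  linarith

theorem one_div_sub_one_div_eq (hP : P ≠ 0) (hh : h ≠ 0) (h₁ : 3 * h - i ≠ 0)
    (h₂ : 3 * h - i - 1 ≠ 0) :
    1 / (P * (3 - (i + 1) / h)) - 1 / (P * (3 - i / h)) =
      h / (P * (3 * h - i) * (3 * h - i - 1)) := by
  rw [show 3 - (i + 1) / h = (3 * h - i - 1) / h by field_simp; ring,
    show 3 - i / h = (3 * h - i) / h by field_simp]
  field_simp
  ring

theorem one_div_le_div_mul_mul (hP : 0 < P) (hh : 1 ≤ h) (hi : 0 ≤ i) (hih : i ≤ h) :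
    1 / (9 * h * P) ≤ h / (P * (3 * h - i) * (3 * h - i - 1)) := by
  have hprod : (3 * h - i) * (3 * h - i - 1) ≤ 9 * h ^ 2 := by nlinarith
  have hpos : 0 < P * (3 * h - i) * (3 * h - i - 1) :=
    mul_pos (mul_pos hP (by linarith)) (by linarith)
  rw [div_le_div_iff₀ (by positivity) hpos]
  nlinarith [mul_le_mul_of_nonneg_left hprod hP.le]

end rate

theorem fhat_eq_expPair (v h q i : ℕ) (c d : ℝ) :
    fhat v h q i c d =
      expPair ((v : ℝ) ^ (q - 1) * (3 - (i : ℝ) / h))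
        ((v : ℝ) ^ (q - 1) * (3 - ((i : ℝ) + 1) / h)) c d :=
  rfl

theorem exp_neg_three_div_le_fhat {v h q i : ℕ} {c d x : ℝ} (hv : 1 ≤ v) (hh : 1 ≤ h)
    (hq : 2 ≤ q) (hih : i ≤ h) (hcv : c ≤ v) (hdv : d ≤ v) (hx0 : 0 ≤ x) (hxv : x ≤ v) :
    exp (-3 / (v : ℝ) ^ (q - 2)) ≤ fhat v h q i c d x := by
  have hh' : (1 : ℝ) ≤ h := by exact_mod_cast hh
  have hih' : (i : ℝ) ≤ h := by exact_mod_cast hih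
  have hA := two_le_three_sub_div (by linarith) hih'
  have hB := one_le_three_sub_succ_div hh' hih'
  set w : ℝ := (v : ℝ) ^ (q - 2)
  have hw : 0 < w := pow_pos (by exact_mod_cast hv) _
  have hP : (v : ℝ) ^ (q - 1) = w * v := by rw [← pow_succ]; congr 1; omega
  rw [fhat_eq_expPair, hP, show -3 / w = -(1 / w + 2 / w) by ring]
  apply exp_neg_add_le_expPair (by positivity) (by positivity)
  · rw [show 1 / w * (w * v * (3 - i / h)) = v * (3 - i / h) by field_simp]
    nlinarith
  · rw [show 2 / w * (w * v * (3 - (i + 1) / h)) = 2 * v * (3 - (i + 1) / h) by field_simp]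
    nlinarith

theorem fhat_properties_general (v h q : ℕ) (hv : 2 ≤ v) (hh : 1 ≤ h) (hq : 2 ≤ q)
    (i : ℕ) (hih : i ≤ h)
    (c d : ℝ) (hcv : c ≤ (v : ℝ)) (hdv : d ≤ (v : ℝ)) :
    (∀ x : ℝ, HasDerivAt (fhat v h q i c d)
        (fhat v h q i c d x *
          ((h : ℝ) / ((v : ℝ) ^ (q - 1) * (3 * (h : ℝ) - (i : ℝ)) *
            (3 * (h : ℝ) - (i : ℝ) - 1)))) x) ∧
    (∀ x : ℝ, 0 ≤ x → x ≤ (v : ℝ) →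
        Real.exp (-(3 : ℝ) / (v : ℝ) ^ (q - 2)) ≤ fhat v h q i c d x ∧
        Real.exp (-(3 : ℝ)) ≤ Real.exp (-(3 : ℝ) / (v : ℝ) ^ (q - 2))) ∧
    (∀ x : ℝ, 1 ≤ x → x ≤ (v : ℝ) →
        Real.exp (-(3 : ℝ)) / (9 * (h : ℝ) * (v : ℝ) ^ (q - 1))
          ≤ fhat v h q i c d x - fhat v h q i c d (x - 1)) := by
  have hh' : (1 : ℝ) ≤ h := by exact_mod_cast hh
  have hih' : (i : ℝ) ≤ h := by exact_mod_cast hih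
  have hP : (0 : ℝ) < (v : ℝ) ^ (q - 1) := pow_pos (by norm_cast; omega) _
  have hA : (v : ℝ) ^ (q - 1) * (3 - i / h) ≠ 0 :=
    (mul_pos hP (by linarith [two_le_three_sub_div (by linarith) hih'])).ne'
  have hB : (v : ℝ) ^ (q - 1) * (3 - (i + 1) / h) ≠ 0 :=
    (mul_pos hP (by linarith [one_le_three_sub_succ_div hh' hih'])).ne'
  have hrate := one_div_sub_one_div_eq (P := (v : ℝ) ^ (q - 1)) (h := h) (i := i) hP.ne'
    (by positivity) (by linarith) (by linarith)
  have hlow (x : ℝ) (hx0 : 0 ≤ x) (hxv : x ≤ v) := exp_neg_three_div_le_fhat (c := c) (d := d)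
    (by omega) hh hq hih hcv hdv hx0 hxv
  have hexp3 : exp (-3) ≤ exp (-3 / (v : ℝ) ^ (q - 2)) := by
    rw [exp_le_exp, neg_div, neg_le_neg_iff]
    exact div_le_self (by norm_num) (one_le_pow₀ (by norm_cast; omega))
  refine ⟨fun x ↦ ?_, fun x hx0 hxv ↦ ⟨hlow x hx0 hxv, hexp3⟩, fun x hx1 hxv ↦ ?_⟩
  · rw [fhat_eq_expPair, ← hrate]
    exact hasDerivAt_expPair x
  · calc exp (-3) / (9 * h * (v : ℝ) ^ (q - 1))
          = exp (-3) * (1 / (9 * h * (v : ℝ) ^ (q - 1))) := div_eq_mul_one_div _ _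
      _ ≤ fhat v h q i c d (x - 1) *
            (h / ((v : ℝ) ^ (q - 1) * (3 * h - i) * (3 * h - i - 1))) :=
          mul_le_mul (hexp3.trans (hlow _ (by linarith) (by linarith)))
            (one_div_le_div_mul_mul hP hh' i.cast_nonneg hih') (by positivity)
            (expPair_pos _).le
      _ ≤ fhat v h q i c d x - fhat v h q i c d (x - 1) := by
          rw [← hrate, fhat_eq_expPair]
          exact mul_le_expPair_sub hA hB x

/-- (a) `f̂_{i,c,d}` is differentiable with derivative
`f̂_{i,c,d}(x) · h/(v^{q−1}·(3h−i)·(3h−i−1))`; (b) for `0 ≤ x ≤ v`,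
`f̂_{i,c,d}(x) ≥ exp(−3/v^{q−2}) ≥ exp(−3)`; and (c) for `1 ≤ x ≤ v`,
`f̂_{i,c,d}(x) − f̂_{i,c,d}(x−1) ≥ exp(−3)/(9·h·v^{q−1})`. -/
theorem fhat_properties (v h q : ℕ) (hv : 2 ≤ v) (hh : 1 ≤ h) (hq : 2 ≤ q)
    (i : ℕ) (hi1 : 1 ≤ i) (hih : i ≤ h)
    (c d : ℝ) (hc0 : 0 ≤ c) (hcv : c ≤ (v : ℝ)) (hd0 : 0 ≤ d) (hdv : d ≤ (v : ℝ)) :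
    (∀ x : ℝ, HasDerivAt (fhat v h q i c d)
        (fhat v h q i c d x *
          ((h : ℝ) / ((v : ℝ) ^ (q - 1) * (3 * (h : ℝ) - (i : ℝ)) *
            (3 * (h : ℝ) - (i : ℝ) - 1)))) x) ∧
    (∀ x : ℝ, 0 ≤ x → x ≤ (v : ℝ) →
        Real.exp (-(3 : ℝ) / (v : ℝ) ^ (q - 2)) ≤ fhat v h q i c d x ∧
        Real.exp (-(3 : ℝ)) ≤ Real.exp (-(3 : ℝ) / (v : ℝ) ^ (q - 2))) ∧
    (∀ x : ℝ, 1 ≤ x → x ≤ (v : ℝ) →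
        Real.exp (-(3 : ℝ)) / (9 * (h : ℝ) * (v : ℝ) ^ (q - 1))
          ≤ fhat v h q i c d x - fhat v h q i c d (x - 1)) :=
  fhat_properties_general v h q hv hh hq i hih c d hcv hdv
end
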